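/- For all n ≥ 0, the partitions of [n] avoiding both 13/2 and 123 are exactly the layered matchings (partitions of [n] into consecutive intervals each of size 1 or 2), and their number is the Fibonacci number F_n, where F_0 = F_1 = 1 and F_n = F_{n−1} + F_{n−2}. -/
import Mathlib


open Finset

structure SetPartition (n : ℕ) where
  blocks : Finset (Finset ℕ)
  nonempty_mem : ∀ B ∈ blocks, B.Nonempty
  disj : ∀ B ∈ blocks, ∀ C ∈ blocks, B ≠ C → Disjoint B C
  cover : blocks.sup id = Finset.Icc 1 n

/-- `σ` contains the pattern `π`: there is an order-preserving choice of elements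
and an injective assignment of blocks of `π` to distinct blocks of `σ`. -/
def SetPartition.Contains {n k : ℕ} (σ : SetPartition n) (π : SetPartition k) : Prop :=
  ∃ f : ℕ → ℕ, StrictMonoOn f (Finset.Icc 1 k : Set ℕ) ∧
    ∃ g : Finset ℕ → Finset ℕ,
      (∀ B ∈ π.blocks, g B ∈ σ.blocks) ∧
      (∀ B ∈ π.blocks, ∀ C ∈ π.blocks, g B = g C → B = C) ∧
      (∀ B ∈ π.blocks, ∀ x ∈ B, f x ∈ g B)

def SetPartition.Avoids {n k : ℕ} (σ : SetPartition n) (π : SetPartition k) : Prop :=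
  ¬ σ.Contains π

def pat1_2_3 : SetPartition 3 := ⟨{{1}, {2}, {3}}, by decide, by decide, by decide⟩
def pat1_23 : SetPartition 3 := ⟨{{1}, {2, 3}}, by decide, by decide, by decide⟩
def pat12_3 : SetPartition 3 := ⟨{{1, 2}, {3}}, by decide, by decide, by decide⟩
def pat13_2 : SetPartition 3 := ⟨{{1, 3}, {2}}, by decide, by decide, by decide⟩
def pat123 : SetPartition 3 := ⟨{{1, 2, 3}}, by decide, by decide, by decide⟩

/-- A partition is layered when every block is an interval. -/
def SetPartition.Layered {n : ℕ} (σ : SetPartition n) : Prop :=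
  ∀ B ∈ σ.blocks, ∃ a b : ℕ, B = Finset.Icc a b

/-- Fibonacci numbers with `F 0 = F 1 = 1`. -/
def F : ℕ → ℕ
  | 0 => 1
  | 1 => 1
  | n + 2 => F (n + 1) + F n

-- helper lemmas
lemma block_subset {n : ℕ} (σ : SetPartition n) {B : Finset ℕ} (hB : B ∈ σ.blocks) :
    B ⊆ Finset.Icc 1 n := by
  rw [← σ.cover]
  exact Finset.le_sup (f := id) hB

lemma exists_block {n : ℕ} (σ : SetPartition n) {x : ℕ} (hx : x ∈ Finset.Icc 1 n) :
    ∃ B ∈ σ.blocks, x ∈ B := by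
  rw [← σ.cover] at hx
  simpa using Finset.mem_sup.mp hx

lemma block_eq {n : ℕ} (σ : SetPartition n) {B C : Finset ℕ} (hB : B ∈ σ.blocks)
    (hC : C ∈ σ.blocks) {x : ℕ} (hxB : x ∈ B) (hxC : x ∈ C) : B = C := by
  by_contra h
  exact Finset.disjoint_left.mp (σ.disj B hB C hC h) hxB hxC

-- f for three values
lemma sm3 {a b c : ℕ} (hab : a < b) (hbc : b < c) :
    StrictMonoOn (fun x => if x = 1 then a else if x = 2 then b else c)
      (Finset.Icc 1 3 : Set ℕ) := by
  intro x hx y hy hxy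
  simp only [Finset.coe_Icc, Set.mem_Icc] at hx hy
  obtain ⟨hx1,hx3⟩ := hx; obtain ⟨hy1,hy3⟩ := hy
  interval_cases x <;> interval_cases y <;> simp <;> omega

theorem part1 {n : ℕ} (σ : SetPartition n) :
    (σ.Avoids pat13_2 ∧ σ.Avoids pat123) ↔
      (σ.Layered ∧ ∀ B ∈ σ.blocks, B.card ≤ 2) := by
  constructor
  · rintro ⟨h13, h123⟩
    constructor
    · -- layered
      intro B hB
      by_contra hI
      push_neg at hI
      -- B ≠ Icc (min B) (max B); find gap
      have hne : B.Nonempty := σ.nonempty_mem B hB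
      obtain ⟨m, hm, hmin⟩ : ∃ m ∈ B, ∀ x ∈ B, m ≤ x := ⟨B.min' hne, B.min'_mem hne, fun x hx => Finset.min'_le _ _ hx⟩
      obtain ⟨M, hM, hmax⟩ : ∃ M ∈ B, ∀ x ∈ B, x ≤ M := ⟨B.max' hne, B.max'_mem hne, fun x hx => Finset.le_max' _ _ hx⟩
      have hBne : B ≠ Finset.Icc m M := hI m M
      have : ∃ y, m < y ∧ y < M ∧ y ∉ B := by
        by_contra hy
        push_neg at hy
        apply hBne
        ext z
        simp only [Finset.mem_Icc]
        constructor
        · exact fun hz => ⟨hmin z hz, hmax z hz⟩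
        · rintro ⟨h1, h2⟩
          rcases eq_or_lt_of_le h1 with rfl | h1
          · exact hm
          rcases eq_or_lt_of_le h2 with rfl | h2
          · exact hM
          exact hy z h1 h2
      obtain ⟨y, hmy, hyM, hyB⟩ := this
      have hy' : y ∈ Finset.Icc 1 n := by
        have h1 := block_subset σ hB hm
        have h2 := block_subset σ hB hM
        simp only [Finset.mem_Icc] at h1 h2 ⊢
        omega
      obtain ⟨C, hC, hyC⟩ := exists_block σ hy'
      apply h13
      refine ⟨fun x => if x = 1 then m else if x = 2 then y else M, sm3 hmy hyM,
        fun S => if S = ({1, 3} : Finset ℕ) then B else C, ?_, ?_, ?_⟩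
      · intro S hS
        simp only [pat13_2] at hS
        rcases Finset.mem_insert.mp hS with rfl | hS
        · simp [hB]
        · simp only [Finset.mem_singleton] at hS
          subst hS
          simp only [if_neg (by decide : ({2}:Finset ℕ) ≠ {1,3})]
          exact hC
      · intro S hS T hT hST
        simp only [pat13_2] at hS hT
        have hBC : B ≠ C := fun h => hyB (h ▸ hyC)
        have hne2 : ({2}:Finset ℕ) ≠ {1,3} := by decide
        rcases Finset.mem_insert.mp hS with rfl | hS <;>
          rcases Finset.mem_insert.mp hT with rfl | hT
        · rfl
        · simp only [Finset.mem_singleton] at hT; subst hT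
          have hST' : B = C := by simpa [hne2] using hST
          exact absurd hST' hBC
        · simp only [Finset.mem_singleton] at hS; subst hS
          have hST' : C = B := by simpa [hne2] using hST
          exact absurd hST'.symm hBC
        · simp only [Finset.mem_singleton] at hS hT; rw [hS, hT]
      · intro S hS x hx
        simp only [pat13_2] at hS
        rcases Finset.mem_insert.mp hS with rfl | hS
        · simp only [if_pos rfl]
          rcases Finset.mem_insert.mp hx with rfl | hx
          · simpa using hm
          · simp only [Finset.mem_singleton] at hx; subst hx; simpa using hM
        · simp only [Finset.mem_singleton] at hS; subst hS
          simp only [Finset.mem_singleton] at hx; subst hx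
          simp only [if_neg (by decide : ({2}:Finset ℕ) ≠ {1,3})]
          simpa using hyC
    · -- card ≤ 2
      intro B hB
      by_contra hc
      push_neg at hc
      have hne : B.Nonempty := Finset.card_pos.mp (by omega)
      set m := B.min' hne with hmdef
      set M := B.max' hne with hMdef
      have hm : m ∈ B := B.min'_mem hne
      have hM : M ∈ B := B.max'_mem hne
      have hcard : 1 ≤ ((B.erase M).erase m).card := by
        have h1 : (B.erase M).card = B.card - 1 := Finset.card_erase_of_mem hM
        have hmM : m ≠ M := by
          intro h
          have : B.card ≤ 1 := Finset.card_le_one.mpr (fun a ha b hb => by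
            have := Finset.min'_le _ _ ha; have := Finset.le_max' _ _ ha
            have := Finset.min'_le _ _ hb; have := Finset.le_max' _ _ hb
            omega)
          omega
        have h2 : ((B.erase M).erase m).card = (B.erase M).card - 1 :=
          Finset.card_erase_of_mem (Finset.mem_erase.mpr ⟨hmM, hm⟩)
        omega
      obtain ⟨y, hy⟩ := Finset.card_pos.mp (lt_of_lt_of_le zero_lt_one hcard)
      obtain ⟨hym, hy'⟩ := Finset.mem_erase.mp hy
      obtain ⟨hyM, hyB⟩ := Finset.mem_erase.mp hy'
      have hmy : m < y := lt_of_le_of_ne (Finset.min'_le _ _ hyB) (Ne.symm hym)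
      have hyMlt : y < M := lt_of_le_of_ne (Finset.le_max' _ _ hyB) hyM
      apply h123
      refine ⟨fun x => if x = 1 then m else if x = 2 then y else M, sm3 hmy hyMlt,
        fun _ => B, ?_, ?_, ?_⟩
      · intro S hS; exact hB
      · intro S hS T hT _
        simp only [pat123, Finset.mem_singleton] at hS hT
        rw [hS, hT]
      · intro S hS x hx
        simp only [pat123, Finset.mem_singleton] at hS
        subst hS
        fin_cases hx
        · simpa using hm
        · simpa using hyB
        · simpa using hM
  · rintro ⟨hlay, hcard⟩
    have hmem1 : (1:ℕ) ∈ (Finset.Icc 1 3 : Set ℕ) := by simp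
    have hmem2 : (2:ℕ) ∈ (Finset.Icc 1 3 : Set ℕ) := by simp
    have hmem3 : (3:ℕ) ∈ (Finset.Icc 1 3 : Set ℕ) := by simp
    constructor
    · rintro ⟨f, hf, g, hg1, hg2, hg3⟩
      have hB13 : ({1,3}:Finset ℕ) ∈ pat13_2.blocks := by simp [pat13_2]
      have hB2 : ({2}:Finset ℕ) ∈ pat13_2.blocks := by simp [pat13_2]
      have hBC : g {1,3} ≠ g {2} := fun h => by
        have := hg2 _ hB13 _ hB2 h
        exact absurd this (by decide)
      have hf1 : f 1 ∈ g {1,3} := hg3 _ hB13 1 (by decide)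
      have hf3 : f 3 ∈ g {1,3} := hg3 _ hB13 3 (by decide)
      have hf2 : f 2 ∈ g {2} := hg3 _ hB2 2 (by decide)
      have h12 : f 1 < f 2 := hf hmem1 hmem2 (by norm_num)
      have h23 : f 2 < f 3 := hf hmem2 hmem3 (by norm_num)
      obtain ⟨a, b, hab⟩ := hlay _ (hg1 _ hB13)
      have hf2' : f 2 ∈ g {1,3} := by
        rw [hab] at hf1 hf3 ⊢
        simp only [Finset.mem_Icc] at hf1 hf3 ⊢
        omega
      exact Finset.disjoint_left.mp
        (σ.disj _ (hg1 _ hB13) _ (hg1 _ hB2) hBC) hf2' hf2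
    · rintro ⟨f, hf, g, hg1, hg2, hg3⟩
      have hBm : ({1,2,3}:Finset ℕ) ∈ pat123.blocks := by simp [pat123]
      have hf1 : f 1 ∈ g {1,2,3} := hg3 _ hBm 1 (by decide)
      have hf2 : f 2 ∈ g {1,2,3} := hg3 _ hBm 2 (by decide)
      have hf3 : f 3 ∈ g {1,2,3} := hg3 _ hBm 3 (by decide)
      have h12 : f 1 < f 2 := hf hmem1 hmem2 (by norm_num)
      have h23 : f 2 < f 3 := hf hmem2 hmem3 (by norm_num)
      have hsub : ({f 1, f 2, f 3} : Finset ℕ) ⊆ g {1,2,3} := by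
        intro x hx
        rcases Finset.mem_insert.mp hx with rfl | hx
        · exact hf1
        rcases Finset.mem_insert.mp hx with rfl | hx
        · exact hf2
        rw [Finset.mem_singleton] at hx; subst hx; exact hf3
      have hc3 : ({f 1, f 2, f 3} : Finset ℕ).card = 3 := by
        rw [Finset.card_insert_of_notMem (by simp; omega),
          Finset.card_insert_of_notMem (by simp; omega), Finset.card_singleton]
      have := Finset.card_le_card hsub
      have := hcard _ (hg1 _ hBm)
      omega

def G (m : ℕ) : Finset (Finset ℕ) :=
  ((Finset.Icc 1 m).powerset).filter (fun D => ∀ i ∈ D, i + 1 ∉ D)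

lemma G_card : ∀ m, (G m).card = F (m + 1) := by
  intro m
  induction m using Nat.strong_induction_on with
  | _ m ih =>
    match m with
    | 0 => decide
    | 1 => decide
    | m + 2 =>
      have hsplit : G (m + 2) = G (m + 1) ∪ (G m).image (insert (m + 2)) := by
        ext D
        simp only [G, Finset.mem_union, Finset.mem_filter, Finset.mem_powerset,
          Finset.mem_image]
        constructor
        · rintro ⟨hsub, hnc⟩
          by_cases hm : m + 2 ∈ D
          · right
            refine ⟨D.erase (m + 2), ⟨?_, ?_⟩, ?_⟩
            · intro x hx
              obtain ⟨hx1, hx2⟩ := Finset.mem_erase.mp hx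
              have := Finset.mem_Icc.mp (hsub hx2)
              have hxm1 : x ≠ m + 1 := by
                rintro rfl
                exact hnc _ hx2 hm
              simp only [Finset.mem_Icc]
              omega
            · intro i hi
              obtain ⟨_, hi2⟩ := Finset.mem_erase.mp hi
              intro hcon
              exact hnc i hi2 (Finset.mem_erase.mp hcon).2
            · exact Finset.insert_erase hm
          · left
            refine ⟨?_, hnc⟩
            intro x hx
            have := Finset.mem_Icc.mp (hsub hx)
            have : x ≠ m + 2 := by rintro rfl; exact hm hx
            simp only [Finset.mem_Icc]; omega
        · rintro (⟨hsub, hnc⟩ | ⟨E, ⟨hsub, hnc⟩, rfl⟩)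
          · refine ⟨hsub.trans (Finset.Icc_subset_Icc_right (by omega)), hnc⟩
          · constructor
            · intro x hx
              rcases Finset.mem_insert.mp hx with rfl | hx
              · simp only [Finset.mem_Icc]; omega
              · have := Finset.mem_Icc.mp (hsub hx)
                simp only [Finset.mem_Icc]; omega
            · intro i hi
              rcases Finset.mem_insert.mp hi with rfl | hi
              · intro hcon
                rcases Finset.mem_insert.mp hcon with h | h
                · omega
                · have := Finset.mem_Icc.mp (hsub h); omega
              · have := Finset.mem_Icc.mp (hsub hi)
                intro hcon
                rcases Finset.mem_insert.mp hcon with h | h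
                · omega
                · exact hnc i hi h
      have hdisj : Disjoint (G (m + 1)) ((G m).image (insert (m + 2))) := by
        rw [Finset.disjoint_right]
        rintro D hD hD'
        obtain ⟨E, hE, rfl⟩ := Finset.mem_image.mp hD
        obtain ⟨hsub, _⟩ := Finset.mem_filter.mp hD'
        have := Finset.mem_Icc.mp ((Finset.mem_powerset.mp hsub) (Finset.mem_insert_self _ _))
        omega
      have hinj : ((G m).image (insert (m + 2))).card = (G m).card := by
        apply Finset.card_image_of_injOn
        intro D hD E hE h
        obtain ⟨hsubD, _⟩ := Finset.mem_filter.mp hD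
        obtain ⟨hsubE, _⟩ := Finset.mem_filter.mp hE
        have hDm : m + 2 ∉ D := fun hc => by
          have := Finset.mem_Icc.mp ((Finset.mem_powerset.mp hsubD) hc); omega
        have hEm : m + 2 ∉ E := fun hc => by
          have := Finset.mem_Icc.mp ((Finset.mem_powerset.mp hsubE) hc); omega
        rw [← Finset.erase_insert hDm, ← Finset.erase_insert hEm, h]
      rw [hsplit, Finset.card_union_of_disjoint hdisj, hinj, ih (m+1) (by omega),
        ih m (by omega)]
      rfl

lemma SetPartition.ext' {n : ℕ} {σ τ : SetPartition n} (h : σ.blocks = τ.blocks) : σ = τ := by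
  cases σ; cases τ; cases h; rfl

def Dmap {n : ℕ} (σ : SetPartition n) : Finset ℕ :=
  (Finset.Icc 1 n).filter (fun i => ∃ B ∈ σ.blocks, i ∈ B ∧ i + 1 ∈ B)

lemma block_shape {n : ℕ} {σ : SetPartition n} (hlay : σ.Layered)
    (hcard : ∀ B ∈ σ.blocks, B.card ≤ 2) {B : Finset ℕ} (hB : B ∈ σ.blocks) :
    ∃ a, B = {a} ∨ B = {a, a + 1} := by
  obtain ⟨a, b, rfl⟩ := hlay B hB
  have hne := σ.nonempty_mem _ hB
  have hab : a ≤ b := by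
    obtain ⟨x, hx⟩ := hne
    have := Finset.mem_Icc.mp hx; omega
  have hc := hcard _ hB
  rw [Nat.card_Icc] at hc
  refine ⟨a, ?_⟩
  have hba : b = a ∨ b = a + 1 := by omega
  rcases hba with rfl | rfl
  · left; ext x; simp only [Finset.mem_Icc, Finset.mem_singleton]; omega
  · right; ext x; simp only [Finset.mem_Icc, Finset.mem_insert, Finset.mem_singleton]; omega

lemma mem_Dmap {n : ℕ} {σ : SetPartition n} {i : ℕ} :
    i ∈ Dmap σ ↔ i ∈ Finset.Icc 1 n ∧ ∃ B ∈ σ.blocks, i ∈ B ∧ i + 1 ∈ B := by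
  simp [Dmap]

lemma Dmap_mem_G {n : ℕ} {σ : SetPartition n} (hlay : σ.Layered)
    (hcard : ∀ B ∈ σ.blocks, B.card ≤ 2) : Dmap σ ∈ G (n - 1) := by
  simp only [G, Finset.mem_filter, Finset.mem_powerset]
  constructor
  · intro i hi
    obtain ⟨hi1, B, hB, hiB, hi1B⟩ := mem_Dmap.mp hi
    have h1 := Finset.mem_Icc.mp (block_subset σ hB hiB)
    have h2 := Finset.mem_Icc.mp (block_subset σ hB hi1B)
    simp only [Finset.mem_Icc]; omega
  · intro i hi hcon
    obtain ⟨_, B, hB, hiB, hi1B⟩ := mem_Dmap.mp hi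
    obtain ⟨_, C, hC, hi1C, hi2C⟩ := mem_Dmap.mp hcon
    have hBC : B = C := block_eq σ hB hC hi1B hi1C
    subst hBC
    obtain ⟨a, hsh⟩ := block_shape hlay hcard hB
    rcases hsh with rfl | rfl
    · simp only [Finset.mem_singleton] at hiB hi2C; omega
    · simp only [Finset.mem_insert, Finset.mem_singleton] at hiB hi2C; omega

lemma Dmap_inj {n : ℕ} {σ τ : SetPartition n}
    (hlayσ : σ.Layered) (hcardσ : ∀ B ∈ σ.blocks, B.card ≤ 2)
    (hlayτ : τ.Layered) (hcardτ : ∀ B ∈ τ.blocks, B.card ≤ 2)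
    (h : Dmap σ = Dmap τ) : σ = τ := by
  have key : ∀ (σ' τ' : SetPartition n), σ'.Layered → (∀ B ∈ σ'.blocks, B.card ≤ 2) →
      τ'.Layered → (∀ B ∈ τ'.blocks, B.card ≤ 2) → Dmap σ' = Dmap τ' →
      ∀ B ∈ σ'.blocks, B ∈ τ'.blocks := by
    intro σ' τ' hl1 hc1 hl2 hc2 hD B hB
    obtain ⟨a, hsh⟩ := block_shape hl1 hc1 hB
    have haIcc : a ∈ Finset.Icc 1 n := by
      apply block_subset σ' hB
      rcases hsh with rfl | rfl <;> simp
    rcases hsh with rfl | rfl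
    · -- B = {a}
      obtain ⟨C, hC, haC⟩ := exists_block τ' haIcc
      obtain ⟨c, hshC⟩ := block_shape hl2 hc2 hC
      rcases hshC with rfl | rfl
      · have hca : a = c := by simpa using haC
        subst hca; exact hC
      · exfalso
        have hcD : c ∈ Dmap τ' := mem_Dmap.mpr ⟨block_subset τ' hC (by simp), {c, c + 1}, hC, by simp, by simp⟩
        rw [← hD] at hcD
        obtain ⟨_, B', hB', hcB', hc1B'⟩ := mem_Dmap.mp hcD
        have haB' : a ∈ B' := by
          rcases Finset.mem_insert.mp haC with rfl | h
          · exact hcB'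
          · simp only [Finset.mem_singleton] at h; subst h; exact hc1B'
        have hBB' : ({a} : Finset ℕ) = B' := block_eq σ' hB hB' (by simp) haB'
        rw [← hBB'] at hcB' hc1B'
        simp only [Finset.mem_singleton] at hcB' hc1B'
        omega
    · -- B = {a, a+1}
      have haD : a ∈ Dmap σ' := mem_Dmap.mpr ⟨haIcc, _, hB, by simp, by simp⟩
      rw [hD] at haD
      obtain ⟨_, C, hC, haC, ha1C⟩ := mem_Dmap.mp haD
      obtain ⟨c, hshC⟩ := block_shape hl2 hc2 hC
      rcases hshC with rfl | rfl
      · simp only [Finset.mem_singleton] at haC ha1C; omega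
      · simp only [Finset.mem_insert, Finset.mem_singleton] at haC ha1C
        have : c = a := by omega
        subst this; exact hC
  apply SetPartition.ext'
  apply Finset.Subset.antisymm
  · exact fun B hB => key σ τ hlayσ hcardσ hlayτ hcardτ h B hB
  · exact fun B hB => key τ σ hlayτ hcardτ hlayσ hcardσ h.symm B hB

def buildBlocks (n : ℕ) (D : Finset ℕ) : Finset (Finset ℕ) :=
  ((Finset.Icc 1 n).filter (fun i => i - 1 ∉ D)).image
    (fun i => if i ∈ D then {i, i + 1} else {i})

lemma mem_buildBlock {D : Finset ℕ} {i x : ℕ} :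
    x ∈ (if i ∈ D then ({i, i + 1} : Finset ℕ) else {i}) ↔ (x = i ∨ (i ∈ D ∧ x = i + 1)) := by
  split_ifs with h <;> simp [h]

lemma build {n : ℕ} {D : Finset ℕ} (hD : D ∈ G (n - 1)) :
    ∃ σ : SetPartition n, σ.Layered ∧ (∀ B ∈ σ.blocks, B.card ≤ 2) ∧ Dmap σ = D := by
  simp only [G, Finset.mem_filter, Finset.mem_powerset] at hD
  obtain ⟨hsub, hnc⟩ := hD
  have hDr : ∀ i ∈ D, 1 ≤ i ∧ i + 1 ≤ n := by
    intro i hi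
    have := Finset.mem_Icc.mp (hsub hi)
    omega
  refine ⟨⟨buildBlocks n D, ?_, ?_, ?_⟩, ?_, ?_, ?_⟩
  · -- nonempty
    intro B hB
    obtain ⟨i, hi, rfl⟩ := Finset.mem_image.mp hB
    exact ⟨i, mem_buildBlock.mpr (Or.inl rfl)⟩
  · -- disjoint
    intro B hB C hC hBC
    obtain ⟨i, hi, rfl⟩ := Finset.mem_image.mp hB
    obtain ⟨j, hj, rfl⟩ := Finset.mem_image.mp hC
    obtain ⟨hiIcc, hi1⟩ := Finset.mem_filter.mp hi
    obtain ⟨hjIcc, hj1⟩ := Finset.mem_filter.mp hj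
    have hij : i ≠ j := fun h => hBC (by rw [h])
    rw [Finset.disjoint_left]
    intro x hx hx'
    rw [mem_buildBlock] at hx hx'
    have hi0 := Finset.mem_Icc.mp hiIcc
    have hj0 := Finset.mem_Icc.mp hjIcc
    rcases hx with rfl | ⟨hiD, rfl⟩ <;> rcases hx' with h | ⟨hjD, h⟩
    · exact hij h
    · refine hi1 ?_
      have hxj : x - 1 = j := by omega
      rw [hxj]; exact hjD
    · refine hj1 ?_
      have hji : j - 1 = i := by omega
      rw [hji]; exact hiD
    · exact hij (by omega)
  · -- cover
    ext x
    rw [Finset.mem_sup]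
    simp only [id]
    constructor
    · rintro ⟨B, hB, hxB⟩
      obtain ⟨i, hi, rfl⟩ := Finset.mem_image.mp hB
      obtain ⟨hiIcc, _⟩ := Finset.mem_filter.mp hi
      have hi0 := Finset.mem_Icc.mp hiIcc
      rw [mem_buildBlock] at hxB
      rcases hxB with rfl | ⟨hiD, rfl⟩
      · exact hiIcc
      · have := hDr i hiD
        simp only [Finset.mem_Icc]; omega
    · intro hx
      have hx0 := Finset.mem_Icc.mp hx
      by_cases hxd : x - 1 ∈ D
      · have hx1 := hDr _ hxd
        refine ⟨if (x - 1) ∈ D then {x - 1, x - 1 + 1} else {x - 1},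
          Finset.mem_image_of_mem _ (Finset.mem_filter.mpr ⟨?_, ?_⟩), ?_⟩
        · exact Finset.mem_Icc.mpr ⟨by omega, by omega⟩
        · intro hcon
          have := hnc _ hcon
          rw [(by omega : x - 1 - 1 + 1 = x - 1)] at this
          exact this hxd
        · exact mem_buildBlock.mpr (Or.inr ⟨hxd, by omega⟩)
      · exact ⟨_, Finset.mem_image_of_mem _ (Finset.mem_filter.mpr ⟨hx, hxd⟩),
          mem_buildBlock.mpr (Or.inl rfl)⟩
  · -- layered
    intro B hB
    obtain ⟨i, hi, rfl⟩ := Finset.mem_image.mp hB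
    refine ⟨i, if i ∈ D then i + 1 else i, ?_⟩
    split_ifs with h
    · ext x; simp only [Finset.mem_insert, Finset.mem_singleton, Finset.mem_Icc]; omega
    · simp
  · -- card ≤ 2
    intro B hB
    obtain ⟨i, hi, rfl⟩ := Finset.mem_image.mp hB
    split_ifs with h
    · exact (Finset.card_insert_le _ _).trans (by simp)
    · simp
  · -- Dmap = D
    ext i
    rw [mem_Dmap]
    constructor
    · rintro ⟨hiIcc, B, hB, hiB, hi1B⟩
      obtain ⟨j, hj, rfl⟩ := Finset.mem_image.mp hB
      rw [mem_buildBlock] at hiB hi1B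
      rcases hiB with rfl | ⟨hjD, rfl⟩
      · rcases hi1B with h | ⟨hjD', h⟩
        · exact absurd h (by omega)
        · exact hjD'
      · rcases hi1B with h | ⟨hjD', h⟩
        · exact absurd h (by omega)
        · exact absurd h (by omega)
    · intro hiD
      have hi0 := hDr _ hiD
      have hstart : i - 1 ∉ D := by
        intro hcon
        have := hnc _ hcon
        rw [(by omega : i - 1 + 1 = i)] at this
        exact this hiD
      refine ⟨Finset.mem_Icc.mpr ⟨by omega, by omega⟩, if i ∈ D then {i, i + 1} else {i},
        Finset.mem_image_of_mem _ (Finset.mem_filter.mpr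
          ⟨Finset.mem_Icc.mpr ⟨by omega, by omega⟩, hstart⟩), ?_, ?_⟩
      · exact mem_buildBlock.mpr (Or.inl rfl)
      · exact mem_buildBlock.mpr (Or.inr ⟨hiD, rfl⟩)


theorem stmt6 (n : ℕ) :
    (∀ σ : SetPartition n,
      (σ.Avoids pat13_2 ∧ σ.Avoids pat123) ↔
        (σ.Layered ∧ ∀ B ∈ σ.blocks, B.card ≤ 2)) ∧
    ({σ : SetPartition n | σ.Avoids pat13_2 ∧ σ.Avoids pat123}).ncard = F n := by
  refine ⟨fun σ => part1 σ, ?_⟩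
  have hset : {σ : SetPartition n | σ.Avoids pat13_2 ∧ σ.Avoids pat123}
      = {σ : SetPartition n | σ.Layered ∧ ∀ B ∈ σ.blocks, B.card ≤ 2} := by
    ext σ
    exact part1 σ
  rw [hset]
  set S := {σ : SetPartition n | σ.Layered ∧ ∀ B ∈ σ.blocks, B.card ≤ 2} with hS
  have hinj : Set.InjOn Dmap S := by
    rintro σ ⟨h1, h2⟩ τ ⟨h3, h4⟩ h
    exact Dmap_inj h1 h2 h3 h4 h
  have himg : Dmap '' S = ↑(G (n - 1)) := by
    ext D
    simp only [Set.mem_image, hS, Set.mem_setOf_eq, Finset.mem_coe]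
    constructor
    · rintro ⟨σ, ⟨h1, h2⟩, rfl⟩
      exact Dmap_mem_G h1 h2
    · intro hD
      obtain ⟨σ, h1, h2, h3⟩ := build hD
      exact ⟨σ, ⟨h1, h2⟩, h3⟩
  calc S.ncard = (Dmap '' S).ncard := (Set.ncard_image_of_injOn hinj).symm
    _ = (↑(G (n - 1)) : Set (Finset ℕ)).ncard := by rw [himg]
    _ = (G (n - 1)).card := Set.ncard_coe_finset _
    _ = F (n - 1 + 1) := G_card _
    _ = F n := by
        match n with
        | 0 => rfl
        | m + 1 => rfl
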